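/- Let G be a simple quadrangulation of S² with minimum degree 3. Then G is 3-edge-connected. -/

import Mathlib

/-- The setoid on darts whose classes are the cycles (orbits) of a permutation. -/
def cycleSetoid {D : Type} (f : Equiv.Perm D) : Setoid D :=
  ⟨f.SameCycle, ⟨fun x => Equiv.Perm.SameCycle.refl f x,
    fun h => h.symm, fun h h' => h.trans h'⟩⟩

/-- Number of cycles (orbits) of a permutation. -/
noncomputable def orbitCount {D : Type} (f : Equiv.Perm D) : ℕ :=
  Nat.card (Quotient (cycleSetoid f))

/-- Size of the orbit of `d` under `f` (degree of the corresponding vertex/face). -/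
noncomputable def ptDeg {D : Type} (f : Equiv.Perm D) (d : D) : ℕ :=
  Nat.card {x : D // f.SameCycle d x}

/-- A connected combinatorial map (cellular embedded graph) on the sphere `S²`:
darts `D`, rotation `σ` (cyclic order of darts around each vertex), edge
involution `α` (fixed-point-free); vertices are the `σ`-orbits, edges the
`α`-orbits, faces the `σα`-orbits.  The Euler relation `V + F = E + 2`
characterizes cellular embeddings into the sphere. -/
structure CombMapS2 where
  D : Type
  fin : Fintype D
  σ : Equiv.Perm D
  α : Equiv.Perm D
  α_invol : ∀ d, α (α d) = d
  α_fpf : ∀ d, α d ≠ d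
  connected : ∀ d d' : D, ∃ g ∈ Subgroup.closure ({σ, α} : Set (Equiv.Perm D)), g d = d'
  euler : orbitCount σ + orbitCount (σ * α) = orbitCount α + 2

/-- The embedded graph is simple: no loops (the two darts of an edge lie at
distinct vertices) and no parallel edges (two edges with the same pair of
endpoints coincide). -/
def CombMapS2.Simple (M : CombMapS2) : Prop :=
  (∀ d, ¬ M.σ.SameCycle d (M.α d)) ∧
  (∀ d d' : M.D, M.σ.SameCycle d d' → M.σ.SameCycle (M.α d) (M.α d') → M.α.SameCycle d d')

/-- Reachability between darts along the graph, allowed to traverse only edges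
none of whose darts lies in the removed set `R`. -/
def Reaches {D : Type} (σ α : Equiv.Perm D) (R : Set D) : D → D → Prop :=
  Relation.ReflTransGen fun a b => b = σ a ∨ (a ∉ R ∧ b = α a)


/-!
Let `A` be the set of darts reachable from `d` without crossing `R`; it is a union of vertices,
and every edge leaving `A` lies in `R`, so at most two edges leave `A`. A quadrangular face
that crosses from `A` to its complement must cross back, so each cut edge shares a face with
another cut edge. With at most two cut edges, each therefore lies on the face following the
other, and every relative position of two edges on a common quadrangle produces a loop, parallel
edges or a vertex of degree at most `2`. Hence no edge leaves `A`, and `A` is everything by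
connectivity.
-/

open Equiv Function Set Pointwise

section PermOrbit

variable {D : Type} {f : Perm D}

theorem ptDeg_eq_minimalPeriod (f : Perm D) (x : D) : ptDeg f x = minimalPeriod f x := by
  have e : {y // f.SameCycle x y} ≃ MulAction.orbit (Subgroup.zpowers f) x :=
    Equiv.subtypeEquivRight fun y => by
      simp only [Perm.SameCycle, MulAction.mem_orbit_iff, Subgroup.exists_zpowers]; rfl
  rw [ptDeg, Nat.card_congr (e.trans (MulAction.orbitZPowersEquiv f x)), Nat.card_zmod]
  rfl

theorem apply_apply_ne_self_of_three_le_ptDeg {x : D} (h : 3 ≤ ptDeg f x) : f (f x) ≠ x := by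
  intro h2
  have : minimalPeriod f x ≤ 2 := IsPeriodicPt.minimalPeriod_le two_pos h2
  rw [ptDeg_eq_minimalPeriod] at h
  omega

theorem pow_eq_one_of_forall_ptDeg_eq {n : ℕ} (h : ∀ x, ptDeg f x = n) : f ^ n = 1 := by
  ext x
  rw [Perm.coe_pow, ← h x, ptDeg_eq_minimalPeriod, iterate_minimalPeriod, Perm.one_apply]

theorem eq_or_eq_of_sameCycle_of_involutive (hf : ∀ x, f (f x) = x) {x y : D}
    (h : f.SameCycle x y) : y = x ∨ y = f x := by
  have hf2 : f ^ 2 = 1 := Perm.ext fun x => by simpa [sq] using hf x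
  obtain ⟨i, rfl⟩ := h
  obtain ⟨k, rfl | rfl⟩ := Int.even_or_odd' i
  · left; simp [zpow_mul, hf2]
  · right; simp [zpow_add, zpow_mul, hf2]

theorem Equiv.Perm.smul_set_eq_of_mapsTo [Finite D] {A : Set D} (h : MapsTo f A A) :
    f • A = A := by
  change f '' A = A
  exact eq_of_subset_of_ncard_le h.image_subset (ncard_image_of_injective _ f.injective).ge
    (toFinite A)

end PermOrbit

namespace CombMapS2

variable (M : CombMapS2)

theorem eq_univ_of_mapsTo {A : Set M.D} (hA : A.Nonempty) (hσ : MapsTo M.σ A A)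
    (hα : MapsTo M.α A A) : A = univ := by
  have : Fintype M.D := M.fin
  obtain ⟨d, hd⟩ := hA
  refine eq_univ_of_forall fun x => ?_
  obtain ⟨g, hg, rfl⟩ := M.connected d x
  have hstab : Subgroup.closure {M.σ, M.α} ≤ MulAction.stabilizer (Perm M.D) A :=
    (Subgroup.closure_le _).2 <| by
      rintro _ (rfl | rfl)
      exacts [Perm.smul_set_eq_of_mapsTo hσ, Perm.smul_set_eq_of_mapsTo hα]
  rw [← MulAction.mem_stabilizer_iff.1 (hstab hg)]
  exact smul_mem_smul_set hd

variable {M}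

theorem Simple.eq_or_eq_α_of_sameCycle (hs : M.Simple) {d d' : M.D} (h : M.σ.SameCycle d d')
    (h' : M.σ.SameCycle (M.α d) (M.α d')) : d' = d ∨ d' = M.α d :=
  eq_or_eq_of_sameCycle_of_involutive M.α_invol (hs.2 d d' h h')

end CombMapS2

section Cut

variable {D : Type} {σ α : Perm D}

def cutDarts (α : Perm D) (A : Set D) : Set D := {x | x ∈ A ∧ α x ∉ A}

theorem two_mul_ncard_cutDarts_le [Finite D] {A R : Set D} (hR : ∀ x ∈ R, α x ∈ R)
    (hcut : cutDarts α A ⊆ R) : 2 * (cutDarts α A).ncard ≤ R.ncard := by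
  set C := cutDarts α A
  have hdisj : Disjoint C (α '' C) := by
    rw [disjoint_left]
    rintro x hx ⟨y, hy, rfl⟩
    exact hy.2 hx.1
  have hsub : C ∪ α '' C ⊆ R := union_subset hcut (image_subset_iff.2 fun y hy => hR y (hcut hy))
  calc 2 * C.ncard = (C ∪ α '' C).ncard := by
        rw [ncard_union_eq hdisj, ncard_image_of_injective _ α.injective, two_mul]
    _ ≤ R.ncard := ncard_le_ncard hsub

/-- `e = α (τ ^ k c)` for `k = 1, 2, 3`, where `τ = σ * α`: `e` is the other dart of an edge of
the face of `c` other than the edge of `c`. The case `k = 3` is written `σ e = c`, as `τ ^ 4 = 1`. -/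
def FaceLinked (σ α : Perm D) (c e : D) : Prop :=
  e = α (σ (α c)) ∨ e = α (σ (α (σ (α c)))) ∨ σ e = c

theorem face_apply_eq_self (hface : (σ * α) ^ 4 = 1) (x : D) :
    σ (α (σ (α (σ (α (σ (α x))))))) = x := by
  simpa [pow_succ, Perm.mul_apply] using Perm.ext_iff.1 hface x

/-- The face following `c` leaves `A` across the cut edge of `c`, so it must re-enter `A`
across another cut edge. -/
theorem exists_faceLinked_mem_cutDarts (hα : ∀ x, α (α x) = x) (hface : (σ * α) ^ 4 = 1)
    {A : Set D} (hA : ∀ x, σ x ∈ A ↔ x ∈ A) {c : D} (hc : c ∈ cutDarts α A) :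
    ∃ e ∈ cutDarts α A, FaceLinked σ α c e := by
  obtain ⟨hcA, hαc⟩ := hc
  have h₁ : σ (α c) ∉ A := by rwa [hA]
  by_cases h₂ : α (σ (α c)) ∈ A
  · exact ⟨_, ⟨h₂, by rwa [hα]⟩, Or.inl rfl⟩
  by_cases h₃ : α (σ (α (σ (α c)))) ∈ A
  · exact ⟨_, ⟨h₃, by rwa [hα, hA]⟩, Or.inr (Or.inl rfl)⟩
  refine ⟨α (σ (α (σ (α (σ (α c)))))), ⟨?_, by rwa [hα, hA]⟩, Or.inr (Or.inr ?_)⟩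
  · rw [← hA, face_apply_eq_self hface]
    exact hcA
  · exact face_apply_eq_self hface c

end Cut

namespace CombMapS2

variable {M : CombMapS2}

theorem Simple.pow_apply_α_ne (hs : M.Simple) (x : M.D) (n : ℕ) : (M.σ ^ n) (M.α x) ≠ x :=
  fun h => hs.1 x (Perm.SameCycle.symm ⟨n, by simpa using h⟩)

theorem Simple.not_faceLinked_self (hs : M.Simple) (hdeg : ∀ x, M.σ (M.σ x) ≠ x) (c : M.D) :
    ¬ FaceLinked M.σ M.α c c := by
  rintro (h | h | h)
  · exact hdeg (M.α c) (by grind [M.α_invol])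
  · apply hs.pow_apply_α_ne (M.σ (M.α c)) 2
    simp only [pow_succ, pow_zero, Perm.mul_apply, Perm.one_apply]
    grind [M.α_invol]
  · exact hdeg c (by rw [h, h])

theorem Simple.not_faceLinked_opposite_pair (hs : M.Simple) (hdeg : ∀ x, M.σ (M.σ x) ≠ x)
    (hface : (M.σ * M.α) ^ 4 = 1) {c e : M.D} (hce : e ≠ c)
    (he : e = M.α (M.σ (M.α (M.σ (M.α c))))) (hc : c = M.α (M.σ (M.α (M.σ (M.α e))))) :
    False := by
  have hc' : M.σ (M.α (M.σ e)) = c := by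
    have := face_apply_eq_self hface c
    grind [M.α_invol]
  have he' : M.σ (M.α (M.σ c)) = e := by
    have := face_apply_eq_self hface e
    grind [M.α_invol]
  -- the edges of the darts `σ c` and `σ⁻¹ c` both join the vertex of `c` to that of `e`
  rcases hs.eq_or_eq_α_of_sameCycle (d := M.α (M.σ e)) (d' := M.σ c) ⟨2, by simp [sq, hc']⟩
    (by rw [M.α_invol]; exact .symm ⟨2, by simp [sq, he']⟩) with h | h
  · exact hdeg _ (by rw [hc', ← h])
  · exact hce (M.σ.injective (M.α.injective (by rw [h, M.α_invol])))

/-- Each of the nine relative positions of two cut edges on a common quadrangle gives a loop,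
a pair of parallel edges or a vertex of degree at most `2`. -/
theorem Simple.not_faceLinked_pair (hs : M.Simple) (hdeg : ∀ x, M.σ (M.σ x) ≠ x)
    (hface : (M.σ * M.α) ^ 4 = 1) {c e : M.D} (hce : e ≠ c) (hace : e ≠ M.α c)
    (h : FaceLinked M.σ M.α c e) (h' : FaceLinked M.σ M.α e c) : False := by
  have loop₁ {c e : M.D} (he : e = M.α (M.σ (M.α c)))
      (hc : c = M.α (M.σ (M.α (M.σ (M.α e))))) : False := by
    apply hs.pow_apply_α_ne (M.σ (M.σ (M.α c))) 3
    simp only [pow_succ, pow_zero, Perm.mul_apply, Perm.one_apply]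
    grind [M.α_invol]
  have loop₂ {c e : M.D} (he : e = M.α (M.σ (M.α (M.σ (M.α c))))) (hc : M.σ c = e) : False := by
    apply hs.pow_apply_α_ne (M.σ e) 3
    have := face_apply_eq_self hface c
    simp only [pow_succ, pow_zero, Perm.mul_apply, Perm.one_apply]
    grind [M.α_invol]
  have parallel {c e : M.D} (hce : e ≠ c) (hace : e ≠ M.α c) (he : e = M.α (M.σ (M.α c)))
      (hc : M.σ c = e) : False := by
    rcases hs.eq_or_eq_α_of_sameCycle (d := c) (d' := e) ⟨1, by simp [hc]⟩
      ⟨1, by simp [he, M.α_invol]⟩ with h | h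
    exacts [hce h, hace h]
  have hace' : c ≠ M.α e := fun h => hace (by rw [h, M.α_invol])
  rcases h with h | h | h <;> rcases h' with h' | h' | h'
  · exact hdeg (M.α c) (by grind [M.α_invol])
  · exact loop₁ h h'
  · exact parallel hce hace h h'
  · exact loop₁ h' h
  · exact hs.not_faceLinked_opposite_pair hdeg hface hce h h'
  · exact loop₂ h h'
  · exact parallel hce.symm hace' h' h
  · exact loop₂ h' h
  · exact hdeg e (by rw [h, h'])

theorem Simple.cutDarts_eq_empty (hs : M.Simple) (hdeg : ∀ x, M.σ (M.σ x) ≠ x)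
    (hface : (M.σ * M.α) ^ 4 = 1) {A : Set M.D} (hA : ∀ x, M.σ x ∈ A ↔ x ∈ A)
    (hcard : (cutDarts M.α A).ncard ≤ 2) : cutDarts M.α A = ∅ := by
  have : Fintype M.D := M.fin
  by_contra hne
  obtain ⟨c, hc⟩ := nonempty_iff_ne_empty.2 hne
  obtain ⟨e, he, hce⟩ := exists_faceLinked_mem_cutDarts M.α_invol hface hA hc
  have hec : e ≠ c := by rintro rfl; exact hs.not_faceLinked_self hdeg e hce
  have hC : cutDarts M.α A = {c, e} :=
    (eq_of_subset_of_ncard_le (insert_subset hc (singleton_subset_iff.2 he))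
      (by rwa [ncard_pair hec.symm]) (toFinite _)).symm
  obtain ⟨f, hf, hef⟩ := exists_faceLinked_mem_cutDarts M.α_invol hface hA he
  rw [hC] at hf
  rcases hf with rfl | rfl
  · exact hs.not_faceLinked_pair hdeg hface hec (fun h => hc.2 (h ▸ he.1)) hce hef
  · exact hs.not_faceLinked_self hdeg f hef

end CombMapS2

/-- a simple quadrangulation of `S²` with minimum degree 3 is
3-edge-connected: removing fewer than 3 edges (an α-invariant set of at most
4 darts) cannot disconnect it. -/
theorem stmt16 (M : CombMapS2) (hs : M.Simple)
    (hq : ∀ d, ptDeg (M.σ * M.α) d = 4)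
    (hmin : ∀ d, 3 ≤ ptDeg M.σ d) :
    ∀ R : Set M.D, (∀ d ∈ R, M.α d ∈ R) → Nat.card R ≤ 4 →
      ∀ d d' : M.D, Reaches M.σ M.α R d d' := by
  have : Fintype M.D := M.fin
  intro R hR hRcard d
  set A := {x | Reaches M.σ M.α R d x}
  have hσ : MapsTo M.σ A A := fun _ hx => hx.tail (Or.inl rfl)
  have hA (x : M.D) : M.σ x ∈ A ↔ x ∈ A := by
    nth_rw 1 [← Perm.smul_set_eq_of_mapsTo hσ]
    exact smul_mem_smul_set_iff
  have hcut : cutDarts M.α A ⊆ R := fun x ⟨hx, hαx⟩ =>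
    by_contra fun hxR => hαx (hx.tail (Or.inr ⟨hxR, rfl⟩))
  have hcard : (cutDarts M.α A).ncard ≤ 2 := by
    have := two_mul_ncard_cutDarts_le hR hcut
    rw [Nat.card_coe_set_eq] at hRcard
    omega
  have hempty := hs.cutDarts_eq_empty (fun x => apply_apply_ne_self_of_three_le_ptDeg (hmin x))
    (pow_eq_one_of_forall_ptDeg_eq hq) hA hcard
  have hα : MapsTo M.α A A := fun x hx => by_contra fun hαx => hempty.subset ⟨hx, hαx⟩
  intro d'
  show d' ∈ A
  rw [M.eq_univ_of_mapsTo ⟨d, .refl⟩ hσ hα]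
  trivial
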